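/- Let d, m ∈ ℕ, x, y ∈ ℝ^d, L, T ∈ [0,∞), δ ∈ (0,∞), p ∈ [2,∞), B ∈ ℝ^{d×m}, let (Ω, F, P) be a probability space, let W : [0,T] × Ω → ℝ^m be a standard Brownian motion, let μ : ℝ^d → ℝ^d be L-Lipschitz, let X, Y : [0,T] × Ω → ℝ^d be continuous stochastic processes, and let a : [0,T] × Ω → ℝ^d be jointly measurable with ∫_0^t ‖a_s‖ ds < ∞, Y_t = y + ∫_0^t a_s ds + B W_t, and X_t = x + ∫_0^t μ(X_s) ds + B W_t for all t ∈ [0,T]. Then for all t ∈ [0,T], (E[‖X_t − Y_t‖^p])^(1/p) ≤ exp((L + (1 − 1/p)/δ) t) (‖x − y‖ + δ^(1 − 1/p) (∫_0^t E[‖a_s − μ(Y_s)‖^p] ds)^(1/p)). -/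

import Mathlib

/-!
Both equations are driven by the same noise `B W`, so it cancels in `X - Y`, and for every `ω`
a Grönwall argument gives `‖X_t - Y_t‖ ≤ e^{Lt} (‖x - y‖ + ∫_0^t ‖a_s - μ(Y_s)‖ ds)`.
Taking `L^p(P)` norms, Minkowski's inequality splits off `‖x - y‖`, while Hölder's inequality
in time followed by Tonelli bounds the `L^p(P)` norm of the time integral by
`t^{1-1/p} (∫_0^t E ‖a_s - μ(Y_s)‖^p ds)^{1/p}`. Finally `t ≤ δ e^{t/δ}` trades `t^{1-1/p}` for
`δ^{1-1/p} e^{(1-1/p) t/δ}`.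
-/

open MeasureTheory ProbabilityTheory
open scoped ENNReal NNReal

/-- A standard Brownian motion with values in `ℝ^m` on the time interval `[0,T]`. -/
structure IsStdBrownianMotion {Ω : Type*} [MeasurableSpace Ω] (P : Measure Ω)
    (m : ℕ) (T : ℝ) (W : ℝ → Ω → (Fin m → ℝ)) : Prop where
  measurable : ∀ t, Measurable (W t)
  init : ∀ ω, W 0 ω = 0
  cont : ∀ ω, ContinuousOn (fun t => W t ω) (Set.Icc 0 T)
  incr_gaussian : ∀ s t : ℝ, 0 ≤ s → s ≤ t → t ≤ T → ∀ i : Fin m,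
    P.map (fun ω => W t ω i - W s ω i) = gaussianReal 0 (Real.toNNReal (t - s))
  indep_incr : ∀ (n : ℕ) (τ : ℕ → ℝ), Monotone τ → (∀ k, τ k ∈ Set.Icc (0:ℝ) T) →
    iIndepFun
      (fun q : Fin n × Fin m => fun ω => W (τ (q.1 + 1)) ω q.2 - W (τ q.1) ω q.2) P

open Set Real

theorem add_mul_gronwallBound_zero (K L x : ℝ) :
    K + L * gronwallBound 0 L K x = K * exp (L * x) := by
  by_cases hL : L = 0
  · simp [hL, gronwallBound_K0]
  · rw [gronwallBound_of_K_ne_0 hL]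
    field_simp
    ring

theorem le_mul_exp_of_le_add_mul_integral {u : ℝ → ℝ} {a b K L : ℝ} (hab : a ≤ b) (hL : 0 ≤ L)
    (hu : ContinuousOn u (Icc a b)) (hle : ∀ s ∈ Icc a b, u s ≤ K + L * ∫ r in a..s, u r) :
    u b ≤ K * exp (L * (b - a)) := by
  -- `ū` extends `u` continuously to `ℝ`, so `s ↦ ∫ r in a..s, ū r` is differentiable everywhere
  -- and the differential Grönwall inequality applies to it.
  set ū : ℝ → ℝ := fun s => u (projIcc a b hab s)
  have hū : Continuous ū :=
    hu.comp_continuous (continuous_subtype_val.comp continuous_projIcc) fun s =>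
      (projIcc a b hab s).2
  have hūu : EqOn ū u (Icc a b) := fun s hs => by simp only [ū, projIcc_of_mem hab hs]
  have hint : ∀ s ∈ Icc a b, ∫ r in a..s, ū r = ∫ r in a..s, u r := fun s hs =>
    intervalIntegral.integral_congr fun r hr =>
      hūu (Icc_subset_Icc le_rfl hs.2 (by rwa [uIcc_of_le hs.1] at hr))
  have hderiv : ∀ s, HasDerivAt (fun s => ∫ r in a..s, ū r) (ū s) s := fun s =>
    (hū.integral_hasStrictDerivAt a s).hasDerivAt
  have hbound : ∀ s ∈ Ico a b, ū s ≤ L * (∫ r in a..s, ū r) + K := fun s hs => by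
    rw [hūu (Ico_subset_Icc_self hs), hint s (Ico_subset_Icc_self hs), add_comm]
    exact hle s (Ico_subset_Icc_self hs)
  have hgron := le_gronwallBound_of_liminf_deriv_right_le (δ := 0)
    (fun s _ => (hderiv s).continuousAt.continuousWithinAt)
    (fun s _ _ hr => (hderiv s).hasDerivWithinAt.liminf_right_slope_le hr)
    (by simp) hbound b (right_mem_Icc.2 hab)
  calc u b ≤ K + L * ∫ r in a..b, u r := hle b (right_mem_Icc.2 hab)
    _ ≤ K + L * gronwallBound 0 L K (b - a) := by
      rw [← hint b (right_mem_Icc.2 hab)]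
      gcongr
    _ = K * exp (L * (b - a)) := add_mul_gronwallBound_zero K L (b - a)

theorem continuous_of_norm_sub_le_mul {E F : Type*} [SeminormedAddCommGroup E]
    [SeminormedAddCommGroup F] {f : E → F} {L : ℝ} (hf : ∀ v w, ‖f v - f w‖ ≤ L * ‖v - w‖) :
    Continuous f :=
  (LipschitzWith.of_dist_le' (K := L) (by simpa only [dist_eq_norm] using hf)).continuous

section Pathwise

variable {E : Type*} [NormedAddCommGroup E] [NormedSpace ℝ E] {f : E → E} {L : ℝ}
  {X Y a N : ℝ → E} {x y : E} {t : ℝ}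

theorem norm_sub_le_add_mul_integral_of_sub_eq_integral
    (hf : ∀ v w, ‖f v - f w‖ ≤ L * ‖v - w‖) (ht : 0 ≤ t)
    (hX : ContinuousOn X (Icc 0 t)) (hY : ContinuousOn Y (Icc 0 t))
    (ha : IntervalIntegrable a volume 0 t)
    (hXeq : ∀ s ∈ Icc 0 t, X s = x + (∫ r in 0..s, f (X r)) + N s)
    (hYeq : ∀ s ∈ Icc 0 t, Y s = y + (∫ r in 0..s, a r) + N s) {s : ℝ} (hs : s ∈ Icc 0 t) :
    ‖X s - Y s‖ ≤ (‖x - y‖ + ∫ r in 0..t, ‖a r - f (Y r)‖) + L * ∫ r in 0..s, ‖X r - Y r‖ := by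
  have hfc : Continuous f := continuous_of_norm_sub_le_mul hf
  have hsub : ∀ s ∈ Icc 0 t, Icc 0 s ⊆ Icc 0 t := fun s hs => Icc_subset_Icc le_rfl hs.2
  have hu : ContinuousOn (fun r => ‖X r - Y r‖) (Icc 0 t) := (hX.sub hY).norm
  have hfX : ContinuousOn (fun r => f (X r)) (Icc 0 t) := hfc.comp_continuousOn hX
  have hfY : ContinuousOn (fun r => f (Y r)) (Icc 0 t) := hfc.comp_continuousOn hY
  have ha' : ∀ s ∈ Icc 0 t, IntervalIntegrable a volume 0 s := fun s hs =>
    ha.mono_set (by rw [uIcc_of_le ht, uIcc_of_le hs.1]; exact hsub s hs)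
  set g : ℝ → ℝ := fun r => ‖a r - f (Y r)‖
  have hg : ∀ s ∈ Icc 0 t, IntervalIntegrable g volume 0 s := fun s hs =>
    ((ha' s hs).sub ((hfY.mono (hsub s hs)).intervalIntegrable_of_Icc hs.1)).norm
  have hdrift : ∀ r ∈ Icc 0 t, ‖f (X r) - a r‖ ≤ L * ‖X r - Y r‖ + g r := fun r _ =>
    calc ‖f (X r) - a r‖ ≤ ‖f (X r) - f (Y r)‖ + ‖f (Y r) - a r‖ :=
          norm_sub_le_norm_sub_add_norm_sub _ _ _
      _ ≤ L * ‖X r - Y r‖ + g r := by rw [norm_sub_rev (f (Y r))]; gcongr; exact hf _ _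
  have hus : IntervalIntegrable (fun r => ‖X r - Y r‖) volume 0 s :=
    (hu.mono (hsub s hs)).intervalIntegrable_of_Icc hs.1
  have hdiff : X s - Y s = x - y + ∫ r in 0..s, (f (X r) - a r) := by
    rw [hXeq s hs, hYeq s hs, intervalIntegral.integral_sub
      ((hfX.mono (hsub s hs)).intervalIntegrable_of_Icc hs.1) (ha' s hs)]
    abel
  calc ‖X s - Y s‖ ≤ ‖x - y‖ + ∫ r in 0..s, ‖f (X r) - a r‖ := by
        rw [hdiff]
        exact (norm_add_le _ _).trans
          (add_le_add_right (intervalIntegral.norm_integral_le_integral_norm hs.1) _)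
    _ ≤ ‖x - y‖ + ∫ r in 0..s, (L * ‖X r - Y r‖ + g r) := by
        gcongr
        refine intervalIntegral.integral_mono_on hs.1
          ((((hfX.mono (hsub s hs)).intervalIntegrable_of_Icc hs.1).sub (ha' s hs)).norm)
          ((hus.const_mul L).add (hg s hs)) fun r hr => hdrift r (hsub s hs hr)
    _ = ‖x - y‖ + (∫ r in 0..s, g r) + L * ∫ r in 0..s, ‖X r - Y r‖ := by
        rw [intervalIntegral.integral_add (hus.const_mul L) (hg s hs),
          intervalIntegral.integral_const_mul]
        ring
    _ ≤ (‖x - y‖ + ∫ r in 0..t, g r) + L * ∫ r in 0..s, ‖X r - Y r‖ := by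
        gcongr
        exact intervalIntegral.integral_mono_interval le_rfl hs.1 hs.2
          (Filter.Eventually.of_forall fun r => norm_nonneg _) (hg t ⟨ht, le_rfl⟩)

theorem norm_sub_le_exp_mul_of_sub_eq_integral (hL : 0 ≤ L)
    (hf : ∀ v w, ‖f v - f w‖ ≤ L * ‖v - w‖) (ht : 0 ≤ t)
    (hX : ContinuousOn X (Icc 0 t)) (hY : ContinuousOn Y (Icc 0 t))
    (ha : IntervalIntegrable a volume 0 t)
    (hXeq : ∀ s ∈ Icc 0 t, X s = x + (∫ r in 0..s, f (X r)) + N s)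
    (hYeq : ∀ s ∈ Icc 0 t, Y s = y + (∫ r in 0..s, a r) + N s) :
    ‖X t - Y t‖ ≤ exp (L * t) * (‖x - y‖ + ∫ r in 0..t, ‖a r - f (Y r)‖) := by
  simpa only [sub_zero, mul_comm] using
    le_mul_exp_of_le_add_mul_integral (u := fun s => ‖X s - Y s‖) ht hL (hX.sub hY).norm
      fun s hs => norm_sub_le_add_mul_integral_of_sub_eq_integral hf ht hX hY ha hXeq hYeq hs

theorem enorm_sub_le_exp_mul_of_sub_eq_integral (hL : 0 ≤ L)
    (hf : ∀ v w, ‖f v - f w‖ ≤ L * ‖v - w‖) (ht : 0 ≤ t)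
    (hX : ContinuousOn X (Icc 0 t)) (hY : ContinuousOn Y (Icc 0 t))
    (ha : IntervalIntegrable a volume 0 t)
    (hXeq : ∀ s ∈ Icc 0 t, X s = x + (∫ r in 0..s, f (X r)) + N s)
    (hYeq : ∀ s ∈ Icc 0 t, Y s = y + (∫ r in 0..s, a r) + N s) :
    ‖X t - Y t‖ₑ
      ≤ ENNReal.ofReal (exp (L * t)) * (‖x - y‖ₑ + ∫⁻ r in Ioc 0 t, ‖a r - f (Y r)‖ₑ) := by
  have hI : 0 ≤ ∫ r in 0..t, ‖a r - f (Y r)‖ :=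
    intervalIntegral.integral_nonneg ht fun _ _ => norm_nonneg _
  calc ‖X t - Y t‖ₑ = ENNReal.ofReal ‖X t - Y t‖ := (ofReal_norm _).symm
    _ ≤ ENNReal.ofReal (exp (L * t) * (‖x - y‖ + ∫ r in 0..t, ‖a r - f (Y r)‖)) :=
      ENNReal.ofReal_le_ofReal
        (norm_sub_le_exp_mul_of_sub_eq_integral hL hf ht hX hY ha hXeq hYeq)
    _ = ENNReal.ofReal (exp (L * t))
          * (‖x - y‖ₑ + ‖∫ r in Ioc 0 t, ‖a r - f (Y r)‖‖ₑ) := by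
      rw [ENNReal.ofReal_mul (exp_nonneg _), ENNReal.ofReal_add (norm_nonneg _) hI, ofReal_norm,
        ← Real.enorm_of_nonneg hI, intervalIntegral.integral_of_le ht]
    _ ≤ _ := by
      gcongr
      simpa only [enorm_norm] using
        enorm_integral_le_lintegral_enorm (μ := volume.restrict (Ioc 0 t)) fun r => ‖a r - f (Y r)‖

end Pathwise

theorem rpow_le_rpow_mul_exp {t δ β : ℝ} (ht : 0 ≤ t) (hδ : 0 < δ) (hβ : 0 ≤ β) :
    t ^ β ≤ δ ^ β * exp (β / δ * t) := by
  have hlin : t ≤ δ * exp (t / δ) := by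
    calc t = δ * (t / δ) := by field_simp
      _ ≤ δ * exp (t / δ) := by gcongr; linarith [add_one_le_exp (t / δ)]
  calc t ^ β ≤ (δ * exp (t / δ)) ^ β := rpow_le_rpow ht hlin hβ
    _ = δ ^ β * exp (β / δ * t) := by
      rw [mul_rpow hδ.le (exp_nonneg _), ← exp_mul]
      ring_nf

theorem ofReal_exp_mul_add_rpow_mul_le {L t δ β : ℝ} (ht : 0 ≤ t) (hδ : 0 < δ) (hβ : 0 ≤ β)
    (C S : ℝ≥0∞) :
    ENNReal.ofReal (exp (L * t)) * (C + ENNReal.ofReal t ^ β * S)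
      ≤ ENNReal.ofReal (exp ((L + β / δ) * t)) * (C + ENNReal.ofReal (δ ^ β) * S) := by
  have hconst : ENNReal.ofReal (exp (L * t)) * ENNReal.ofReal t ^ β
      ≤ ENNReal.ofReal (exp ((L + β / δ) * t)) * ENNReal.ofReal (δ ^ β) := by
    rw [ENNReal.ofReal_rpow_of_nonneg ht hβ, ← ENNReal.ofReal_mul (exp_nonneg _),
      ← ENNReal.ofReal_mul (exp_nonneg _)]
    refine ENNReal.ofReal_le_ofReal ?_
    calc exp (L * t) * t ^ β ≤ exp (L * t) * (δ ^ β * exp (β / δ * t)) := by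
          gcongr; exact rpow_le_rpow_mul_exp ht hδ hβ
      _ = exp ((L + β / δ) * t) * δ ^ β := by rw [add_mul, exp_add]; ring
  rw [mul_add, mul_add, ← mul_assoc, ← mul_assoc]
  gcongr
  exact le_add_of_nonneg_right (div_nonneg hβ hδ.le)

namespace MeasureTheory

variable {α β : Type*} [MeasurableSpace α] [MeasurableSpace β] {p : ℝ}

theorem eLpNorm'_const_add_le {P : Measure β} [IsProbabilityMeasure P] (hp : 1 ≤ p) (c : ℝ≥0∞)
    {f : β → ℝ≥0∞} (hf : AEMeasurable f P) :
    eLpNorm' (fun ω => c + f ω) p P ≤ c + eLpNorm' f p P := by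
  calc eLpNorm' (fun ω => c + f ω) p P ≤ eLpNorm' (fun _ => c) p P + eLpNorm' f p P :=
        eLpNorm'_add_le aestronglyMeasurable_const hf.aestronglyMeasurable hp
    _ = c + eLpNorm' f p P := by
        rw [eLpNorm'_const c (by linarith), measure_univ, ENNReal.one_rpow, mul_one, enorm_eq_self]

theorem eLpNorm'_lintegral_le {ν : Measure α} [SFinite ν] {P : Measure β} [SFinite P]
    (hp : 1 ≤ p) {G : α → β → ℝ≥0∞} (hG : Measurable (Function.uncurry G)) :
    eLpNorm' (fun ω => ∫⁻ s, G s ω ∂ν) p P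
      ≤ ν univ ^ (1 - 1 / p) * (∫⁻ s, ∫⁻ ω, G s ω ^ p ∂P ∂ν) ^ (1 / p) := by
  have hp0 : 0 < p := by linarith
  have hGω : ∀ ω, Measurable (G · ω) := fun ω => hG.comp (measurable_id.prodMk measurable_const)
  have holder : ∀ ω, ∫⁻ s, G s ω ∂ν ≤ ν univ ^ (1 - 1 / p) * eLpNorm' (G · ω) p ν := fun ω => by
    simpa [eLpNorm', mul_comm] using
      eLpNorm'_le_eLpNorm'_mul_rpow_measure_univ one_pos hp (hGω ω).aestronglyMeasurable (μ := ν)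
  have hmeas : Measurable fun ω => eLpNorm' (G · ω) p ν :=
    ((hG.pow_const p).lintegral_prod_left').pow_const _
  calc eLpNorm' (fun ω => ∫⁻ s, G s ω ∂ν) p P
      ≤ ν univ ^ (1 - 1 / p) * eLpNorm' (fun ω => eLpNorm' (G · ω) p ν) p P :=
        eLpNorm'_le_mul_eLpNorm'_of_ae_le_mul hmeas.aestronglyMeasurable
          (Filter.Eventually.of_forall fun ω => by simpa only [enorm_eq_self] using holder ω) hp0
    _ = ν univ ^ (1 - 1 / p) * (∫⁻ s, ∫⁻ ω, G s ω ^ p ∂P ∂ν) ^ (1 / p) := by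
        simp only [eLpNorm', enorm_eq_self, ← ENNReal.rpow_mul, one_div_mul_cancel hp0.ne',
          ENNReal.rpow_one]
        rw [lintegral_lintegral_swap (f := fun ω s => G s ω ^ p)
          ((hG.pow_const p).comp measurable_swap).aemeasurable]

theorem eLpNorm'_le_of_enorm_le_mul_add_lintegral {F : Type*} [NormedAddCommGroup F]
    {ν : Measure α} [SFinite ν] {P : Measure β} [IsProbabilityMeasure P] (hp : 1 ≤ p)
    {G : α → β → ℝ≥0∞} (hG : Measurable (Function.uncurry G)) {Z : β → F} {c C : ℝ≥0∞}
    (hZ : ∀ ω, ‖Z ω‖ₑ ≤ c * (C + ∫⁻ s, G s ω ∂ν)) :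
    eLpNorm' Z p P ≤ c * (C + ν univ ^ (1 - 1 / p) * (∫⁻ s, ∫⁻ ω, G s ω ^ p ∂P ∂ν) ^ (1 / p)) := by
  have hJ : Measurable fun ω => ∫⁻ s, G s ω ∂ν := hG.lintegral_prod_left'
  calc eLpNorm' Z p P ≤ c * eLpNorm' (fun ω => C + ∫⁻ s, G s ω ∂ν) p P :=
        eLpNorm'_le_mul_eLpNorm'_of_ae_le_mul (measurable_const.add hJ).aestronglyMeasurable
          (ae_of_all _ fun ω => by simpa only [enorm_eq_self] using hZ ω) (by linarith)
    _ ≤ c * (C + eLpNorm' (fun ω => ∫⁻ s, G s ω ∂ν) p P) := by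
        grw [eLpNorm'_const_add_le hp C hJ.aemeasurable]
    _ ≤ _ := by grw [eLpNorm'_lintegral_le hp hG]

theorem StronglyMeasurable.intervalIntegral_uncurry {E : Type*} [NormedAddCommGroup E]
    [NormedSpace ℝ E] {f : ℝ → β → E} (hf : StronglyMeasurable (Function.uncurry f)) (a b : ℝ) :
    StronglyMeasurable fun ω => ∫ r in a..b, f r ω :=
  hf.integral_prod_left.sub hf.integral_prod_left

end MeasureTheory

theorem measurable_uncurry_comp_projIcc {Ω E : Type*} [MeasurableSpace Ω] [TopologicalSpace E]
    [TopologicalSpace.PseudoMetrizableSpace E] [MeasurableSpace E] [BorelSpace E]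
    {Y : ℝ → Ω → E} {a b : ℝ}
    (hab : a ≤ b) (hcont : ∀ ω, ContinuousOn (Y · ω) (Icc a b))
    (hmeas : ∀ s ∈ Icc a b, Measurable (Y s)) :
    Measurable (Function.uncurry fun s ω => Y (projIcc a b hab s) ω) :=
  measurable_uncurry_of_continuous_of_measurable
    (fun ω => (hcont ω).comp_continuous (continuous_subtype_val.comp continuous_projIcc)
      fun s => (projIcc a b hab s).2)
    fun s => hmeas _ (projIcc a b hab s).2

theorem sde_strong_perturbation_general {Ω : Type*} [MeasurableSpace Ω] (P : Measure Ω)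
    [IsProbabilityMeasure P] (d m : ℕ) (x y : EuclideanSpace ℝ (Fin d))
    (L T : ℝ) (hL : 0 ≤ L) (δ : ℝ) (hδ : 0 < δ) (p : ℝ) (hp : 2 ≤ p)
    (B : Matrix (Fin d) (Fin m) ℝ) (W : ℝ → Ω → (Fin m → ℝ))
    (hW : IsStdBrownianMotion P m T W)
    (μd : EuclideanSpace ℝ (Fin d) → EuclideanSpace ℝ (Fin d))
    (hμ : ∀ v w, ‖μd v - μd w‖ ≤ L * ‖v - w‖)
    (X Y : ℝ → Ω → EuclideanSpace ℝ (Fin d))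
    (hXcont : ∀ ω, ContinuousOn (fun t => X t ω) (Set.Icc 0 T))
    (hYcont : ∀ ω, ContinuousOn (fun t => Y t ω) (Set.Icc 0 T))
    (a : ℝ → Ω → EuclideanSpace ℝ (Fin d))
    (hameas : Measurable (Function.uncurry a))
    (haInt : ∀ ω, ∀ t ∈ Set.Icc (0:ℝ) T,
      IntervalIntegrable (fun s => a s ω) MeasureTheory.volume 0 t)
    (hY : ∀ t ∈ Set.Icc (0:ℝ) T, ∀ ω,
      Y t ω = y + (∫ s in (0:ℝ)..t, a s ω)
        + (EuclideanSpace.equiv (Fin d) ℝ).symm (B.mulVec (W t ω)))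
    (hX : ∀ t ∈ Set.Icc (0:ℝ) T, ∀ ω,
      X t ω = x + (∫ s in (0:ℝ)..t, μd (X s ω))
        + (EuclideanSpace.equiv (Fin d) ℝ).symm (B.mulVec (W t ω))) :
    ∀ t ∈ Set.Icc (0:ℝ) T,
      (∫⁻ ω, (‖X t ω - Y t ω‖₊ : ℝ≥0∞) ^ p ∂P) ^ (1 / p)
        ≤ ENNReal.ofReal (Real.exp ((L + (1 - 1 / p) / δ) * t)) *
          (ENNReal.ofReal ‖x - y‖ +
            ENNReal.ofReal (δ ^ (1 - 1 / p)) *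
              (∫⁻ s in Set.Ioc (0:ℝ) t,
                ∫⁻ ω, (‖a s ω - μd (Y s ω)‖₊ : ℝ≥0∞) ^ p ∂P) ^ (1 / p)) := by
  rintro t ⟨ht, htT⟩
  have hIcc : Icc 0 t ⊆ Icc 0 T := Icc_subset_Icc le_rfl htT
  have hYmeas : ∀ s ∈ Icc 0 t, Measurable (Y s) := fun s hs => by
    have hint := (hameas.stronglyMeasurable.intervalIntegral_uncurry 0 s).measurable
    have hWs := hW.measurable s
    rw [funext (hY s (hIcc hs))]
    fun_prop
  -- Clamping time to `[0, t]` makes the integrand jointly measurable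
  -- without changing it on `Ioc 0 t`.
  set G : ℝ → Ω → ℝ≥0∞ := fun s ω => ‖a s ω - μd (Y (projIcc 0 t ht s) ω)‖ₑ
  have hG : Measurable (Function.uncurry G) :=
    (hameas.sub ((continuous_of_norm_sub_le_mul hμ).measurable.comp
      (measurable_uncurry_comp_projIcc ht (fun ω => (hYcont ω).mono hIcc) hYmeas))).enorm
  have hGY : ∀ ω, EqOn (G · ω) (fun s => ‖a s ω - μd (Y s ω)‖ₑ) (Ioc 0 t) := fun ω s hs => by
    simp only [G, projIcc_of_mem ht (Ioc_subset_Icc_self hs)]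
  have hpath : ∀ ω, ‖X t ω - Y t ω‖ₑ
      ≤ ENNReal.ofReal (exp (L * t)) * (‖x - y‖ₑ + ∫⁻ s in Ioc 0 t, G s ω) := fun ω => by
    rw [setLIntegral_congr_fun measurableSet_Ioc (hGY ω)]
    exact enorm_sub_le_exp_mul_of_sub_eq_integral (X := (X · ω)) (Y := (Y · ω)) (a := (a · ω))
      (N := fun s => (EuclideanSpace.equiv (Fin d) ℝ).symm (B.mulVec (W s ω)))
      hL hμ ht ((hXcont ω).mono hIcc) ((hYcont ω).mono hIcc) (haInt ω t ⟨ht, htT⟩)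
      (fun s hs => hX s (hIcc hs) ω) (fun s hs => hY s (hIcc hs) ω)
  have hS : ∫⁻ s in Ioc 0 t, ∫⁻ ω, G s ω ^ p ∂P
      = ∫⁻ s in Ioc 0 t, ∫⁻ ω, (‖a s ω - μd (Y s ω)‖₊ : ℝ≥0∞) ^ p ∂P :=
    setLIntegral_congr_fun measurableSet_Ioc fun s hs => by simp only [fun ω => hGY ω hs]; rfl
  calc (∫⁻ ω, (‖X t ω - Y t ω‖₊ : ℝ≥0∞) ^ p ∂P) ^ (1 / p)
      = eLpNorm' (fun ω => X t ω - Y t ω) p P := rfl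
    _ ≤ _ := eLpNorm'_le_of_enorm_le_mul_add_lintegral (by linarith) hG hpath
    _ ≤ _ := by
      rw [Measure.restrict_apply_univ, Real.volume_Ioc, sub_zero, ofReal_norm, hS]
      exact ofReal_exp_mul_add_rpow_mul_le ht hδ
        (sub_nonneg.2 (div_le_one_of_le₀ (by linarith) (by linarith))) _ _

/-- Strong `L^p` perturbation estimate for SDEs with additive noise
(Proposition 4.3): with `X_t = x + ∫_0^t μ(X_s) ds + B W_t` and
`Y_t = y + ∫_0^t a_s ds + B W_t`, it holds for `t ∈ [0,T]` that
`(E[‖X_t − Y_t‖^p])^(1/p) ≤ exp((L + (1 − 1/p)/δ) t) (‖x − y‖ +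
δ^(1 − 1/p) (∫_0^t E[‖a_s − μ(Y_s)‖^p] ds)^(1/p))`. -/
theorem sde_strong_perturbation {Ω : Type*} [MeasurableSpace Ω] (P : Measure Ω)
    [IsProbabilityMeasure P] (d m : ℕ) (x y : EuclideanSpace ℝ (Fin d))
    (L T : ℝ) (hL : 0 ≤ L) (hT : 0 ≤ T) (δ : ℝ) (hδ : 0 < δ) (p : ℝ) (hp : 2 ≤ p)
    (B : Matrix (Fin d) (Fin m) ℝ) (W : ℝ → Ω → (Fin m → ℝ))
    (hW : IsStdBrownianMotion P m T W)
    (μd : EuclideanSpace ℝ (Fin d) → EuclideanSpace ℝ (Fin d))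
    (hμ : ∀ v w, ‖μd v - μd w‖ ≤ L * ‖v - w‖)
    (X Y : ℝ → Ω → EuclideanSpace ℝ (Fin d))
    (hXcont : ∀ ω, ContinuousOn (fun t => X t ω) (Set.Icc 0 T))
    (hYcont : ∀ ω, ContinuousOn (fun t => Y t ω) (Set.Icc 0 T))
    (a : ℝ → Ω → EuclideanSpace ℝ (Fin d))
    (hameas : Measurable (Function.uncurry a))
    (haInt : ∀ ω, ∀ t ∈ Set.Icc (0:ℝ) T,
      IntervalIntegrable (fun s => a s ω) MeasureTheory.volume 0 t)
    (hY : ∀ t ∈ Set.Icc (0:ℝ) T, ∀ ω,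
      Y t ω = y + (∫ s in (0:ℝ)..t, a s ω)
        + (EuclideanSpace.equiv (Fin d) ℝ).symm (B.mulVec (W t ω)))
    (hX : ∀ t ∈ Set.Icc (0:ℝ) T, ∀ ω,
      X t ω = x + (∫ s in (0:ℝ)..t, μd (X s ω))
        + (EuclideanSpace.equiv (Fin d) ℝ).symm (B.mulVec (W t ω))) :
    ∀ t ∈ Set.Icc (0:ℝ) T,
      (∫⁻ ω, (‖X t ω - Y t ω‖₊ : ℝ≥0∞) ^ p ∂P) ^ (1 / p)
        ≤ ENNReal.ofReal (Real.exp ((L + (1 - 1 / p) / δ) * t)) *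
          (ENNReal.ofReal ‖x - y‖ +
            ENNReal.ofReal (δ ^ (1 - 1 / p)) *
              (∫⁻ s in Set.Ioc (0:ℝ) t,
                ∫⁻ ω, (‖a s ω - μd (Y s ω)‖₊ : ℝ≥0∞) ^ p ∂P) ^ (1 / p)) :=
  sde_strong_perturbation_general P d m x y L T hL δ hδ p hp B W hW μd hμ X Y hXcont hYcont a hameas
    haInt hY hX
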